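/- For every λ ∈ ρ(A_γ): E^λ F^λ = F^λ E^λ = I on H; E^λ maps Z bijectively onto Z_λ, with the restriction of F^λ to Z_λ as inverse; and E'^{λ̄} maps Z' bijectively onto Z'_{λ̄}, with the restriction of F'^{λ̄} to Z'_{λ̄} as inverse. -/

import Mathlib

noncomputable section

open Filter Topology

namespace GrubbExt

variable {H : Type*} [NormedAddCommGroup H] [InnerProductSpace ℂ H] [CompleteSpace H]

/-- The inclusion of a closed subspace composed with the orthogonal projection onto it,
as a continuous linear map `H →L[ℂ] H`.  This is `i_K ∘ pr_K` in the notation of the paper. -/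
def projCl (K : Submodule ℂ H) (hK : IsClosed (K : Set H)) : H →L[ℂ] H :=
  haveI : CompleteSpace K := hK.completeSpace_coe
  K.subtypeL.comp (K.orthogonalProjectionOnto)

/-- `R` is the (everywhere defined, bounded) inverse of `P - lam`. -/
structure IsResolvent (P : H →ₗ.[ℂ] H) (lam : ℂ) (R : H →L[ℂ] H) : Prop where
  mem : ∀ f : H, R f ∈ P.domain
  left : ∀ u : P.domain, R (P u - lam • (u : H)) = u
  right : ∀ f : H, P ⟨R f, mem f⟩ - lam • R f = f

/-- `E^λ := I + λ(A_γ - λ)^{-1}`, given the resolvent `R = (A_γ - λ)^{-1}`. -/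
def Eop (lam : ℂ) (R : H →L[ℂ] H) : H →L[ℂ] H := ContinuousLinearMap.id ℂ H + lam • R

/-- `E'^{λ̄} := I + λ̄(A_γ^* - λ̄)^{-1}`, given the resolvent `R' = (A_γ^* - λ̄)^{-1}`. -/
def Eop' (lam : ℂ) (R' : H →L[ℂ] H) : H →L[ℂ] H :=
  ContinuousLinearMap.id ℂ H + (starRingEnd ℂ lam) • R'

/-- The resolvent set of a partially defined operator. -/
def resSet (P : H →ₗ.[ℂ] H) : Set ℂ := {lam | ∃ R : H →L[ℂ] H, IsResolvent P lam R}

/-- The set of "Rayleigh quotients" `Re⟨Pu,u⟩` over unit vectors `u` in the domain of `P`;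
the lower bound `m(P)` is the infimum of this set. -/
def raySet (P : H →ₗ.[ℂ] H) : Set ℝ :=
  {r | ∃ u : P.domain, ‖(u : H)‖ = 1 ∧ r = (inner ℂ (P u) (u : H) : ℂ).re}

/-- The abstract set-up of Grubb's extension theory: a dual pair `A_min, A'_min` of closed
densely defined operators in a Hilbert space `H`, together with a reference operator `A_γ`
lying between `A_min` and `A_max := (A'_min)*`, which is bijective with bounded inverse
(and whose adjoint is likewise bijective with bounded inverse). -/
structure Setup (H : Type*) [NormedAddCommGroup H] [InnerProductSpace ℂ H]
    [CompleteSpace H] where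
  Amin : H →ₗ.[ℂ] H
  Amin' : H →ₗ.[ℂ] H
  closed_Amin : IsClosed (Amin.graph : Set (H × H))
  closed_Amin' : IsClosed (Amin'.graph : Set (H × H))
  dense_Amin : Dense (Amin.domain : Set H)
  dense_Amin' : Dense (Amin'.domain : Set H)
  Amin_le_max : Amin ≤ Amin'.adjoint
  Amin'_le_max' : Amin' ≤ Amin.adjoint
  Agam : H →ₗ.[ℂ] H
  Amin_le_Agam : Amin ≤ Agam
  Agam_le_max : Agam ≤ Amin'.adjoint
  Agaminv : H →L[ℂ] H
  Agaminv_mem : ∀ f : H, Agaminv f ∈ Agam.domain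
  Agaminv_left : ∀ u : Agam.domain, Agaminv (Agam u) = u
  Agaminv_right : ∀ f : H, Agam ⟨Agaminv f, Agaminv_mem f⟩ = f
  Agamstarinv : H →L[ℂ] H
  Agamstarinv_mem : ∀ f : H, Agamstarinv f ∈ Agam.adjoint.domain
  Agamstarinv_left : ∀ v : Agam.adjoint.domain, Agamstarinv (Agam.adjoint v) = v
  Agamstarinv_right : ∀ f : H, Agam.adjoint ⟨Agamstarinv f, Agamstarinv_mem f⟩ = f

namespace Setup

variable (S : Setup H)

/-- `A_max := (A'_min)*`. -/
def Amax : H →ₗ.[ℂ] H := S.Amin'.adjoint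

/-- `A'_max := (A_min)*`. -/
def Amax' : H →ₗ.[ℂ] H := S.Amin.adjoint

/-- `u_ζ := u - A_γ^{-1} A_max u`, the nullspace component of `u ∈ D(A_max)`. -/
def uzeta (u : S.Amax.domain) : H := (u : H) - S.Agaminv (S.Amax u)

/-- `v_{ζ'} := v - (A_γ^*)^{-1} A'_max v`, the nullspace component of `v ∈ D(A'_max)`. -/
def vzeta (v : S.Amax'.domain) : H := (v : H) - S.Agamstarinv (S.Amax' v)

/-- `Z := ker A_max`, as a submodule of `H`. -/
def Zker : Submodule ℂ H := (LinearMap.ker S.Amax.toFun).map S.Amax.domain.subtype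

/-- `Z' := ker A'_max`, as a submodule of `H`. -/
def Zker' : Submodule ℂ H := (LinearMap.ker S.Amax'.toFun).map S.Amax'.domain.subtype

lemma coe_Zker :
    (S.Zker : Set H) = ⋂ v : S.Amin'.domain, {y : H | (inner ℂ y (S.Amin' v) : ℂ) = 0} := by
  ext y
  simp only [Set.mem_iInter, Set.mem_setOf_eq, SetLike.mem_coe, Zker, Submodule.mem_map,
    LinearMap.mem_ker]
  constructor
  · rintro ⟨u, hu, rfl⟩ v
    have h := (LinearPMap.adjoint_isFormalAdjoint S.dense_Amin') u v
    have hu' : S.Amin'.adjoint u = 0 := hu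
    rw [hu'] at h
    simpa using h.symm
  · intro h
    have hmem : y ∈ S.Amax.domain := by
      refine LinearPMap.mem_adjoint_domain_of_exists _ ⟨0, fun x => ?_⟩
      simp [h x]
    refine ⟨⟨y, hmem⟩, ?_, rfl⟩
    exact LinearPMap.adjoint_apply_eq S.dense_Amin' ⟨y, hmem⟩ fun x => by simp [h x]

lemma isClosed_Zker : IsClosed (S.Zker : Set H) := by
  rw [S.coe_Zker]
  exact isClosed_iInter fun v =>
    isClosed_eq (Continuous.inner continuous_id continuous_const) continuous_const

lemma coe_Zker' :
    (S.Zker' : Set H) = ⋂ v : S.Amin.domain, {y : H | (inner ℂ y (S.Amin v) : ℂ) = 0} := by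
  ext y
  simp only [Set.mem_iInter, Set.mem_setOf_eq, SetLike.mem_coe, Zker', Submodule.mem_map,
    LinearMap.mem_ker]
  constructor
  · rintro ⟨u, hu, rfl⟩ v
    have h := (LinearPMap.adjoint_isFormalAdjoint S.dense_Amin) u v
    have hu' : S.Amin.adjoint u = 0 := hu
    rw [hu'] at h
    simpa using h.symm
  · intro h
    have hmem : y ∈ S.Amax'.domain := by
      refine LinearPMap.mem_adjoint_domain_of_exists _ ⟨0, fun x => ?_⟩
      simp [h x]
    refine ⟨⟨y, hmem⟩, ?_, rfl⟩
    exact LinearPMap.adjoint_apply_eq S.dense_Amin ⟨y, hmem⟩ fun x => by simp [h x]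

lemma isClosed_Zker' : IsClosed (S.Zker' : Set H) := by
  rw [S.coe_Zker']
  exact isClosed_iInter fun v =>
    isClosed_eq (Continuous.inner continuous_id continuous_const) continuous_const

/-- The orthogonal projection onto `Z = ker A_max`. -/
def projZ : H →L[ℂ] H := projCl S.Zker S.isClosed_Zker

/-- The orthogonal projection onto `Z' = ker A'_max`. -/
def projZ' : H →L[ℂ] H := projCl S.Zker' S.isClosed_Zker'

variable (At : H →ₗ.[ℂ] H)

/-- `D(T) = {u_ζ : u ∈ D(Ã)}`, the set of nullspace components of elements of `D(Ã)`. -/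
def dzeta : Set H := {x | ∃ u : S.Amax.domain, (u : H) ∈ At.domain ∧ x = S.uzeta u}

/-- `{v_{ζ'} : v ∈ D(Ã*)}`. -/
def dzeta' : Set H := {x | ∃ v : S.Amax'.domain, (v : H) ∈ At.adjoint.domain ∧ x = S.vzeta v}

/-- `V := closure {u_ζ : u ∈ D(Ã)}`. -/
def Vsub : Submodule ℂ H := (Submodule.span ℂ (S.dzeta At)).topologicalClosure

/-- `W := closure {v_{ζ'} : v ∈ D(Ã*)}`. -/
def Wsub : Submodule ℂ H := (Submodule.span ℂ (S.dzeta' At)).topologicalClosure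

lemma isClosed_Vsub : IsClosed ((S.Vsub At : Set H)) :=
  Submodule.isClosed_topologicalClosure _

lemma isClosed_Wsub : IsClosed ((S.Wsub At : Set H)) :=
  Submodule.isClosed_topologicalClosure _

/-- The orthogonal projection onto `V`. -/
def projV : H →L[ℂ] H := projCl (S.Vsub At) (S.isClosed_Vsub At)

/-- The orthogonal projection onto `W`. -/
def projW : H →L[ℂ] H := projCl (S.Wsub At) (S.isClosed_Wsub At)

/-- The set `{(u_ζ, pr_W (A_max u)) : u ∈ D(Ã)}`, for a general closed subspace `W`. -/
def TgraphOn (W : Submodule ℂ H) (hW : IsClosed (W : Set H)) : Set (H × H) :=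
  {p | ∃ u : S.Amax.domain, (u : H) ∈ At.domain ∧ p.1 = S.uzeta u ∧
    p.2 = projCl W hW (S.Amax u)}

/-- The graph of the operator `T : V → W` corresponding to `Ã`. -/
def Tgraph : Set (H × H) := S.TgraphOn At (S.Wsub At) (S.isClosed_Wsub At)


/-- `F^λ := I - λ A_γ^{-1}`. -/
def Fop (lam : ℂ) : H →L[ℂ] H := ContinuousLinearMap.id ℂ H - lam • S.Agaminv

/-- `F'^{λ̄} := I - λ̄ (A_γ^*)^{-1}`. -/
def Fop' (lam : ℂ) : H →L[ℂ] H := ContinuousLinearMap.id ℂ H - (starRingEnd ℂ lam) • S.Agamstarinv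

/-- `Z_λ := ker(A_max - λ)`, as a subset of `H`. -/
def ZkerL (lam : ℂ) : Set H :=
  {x | ∃ hx : x ∈ S.Amax.domain, S.Amax ⟨x, hx⟩ = lam • x}

/-- `Z'_{λ̄} := ker(A'_max - λ̄)`, as a subset of `H`. -/
def ZkerL' (lam : ℂ) : Set H :=
  {x | ∃ hx : x ∈ S.Amax'.domain, S.Amax' ⟨x, hx⟩ = (starRingEnd ℂ lam) • x}

/-- `pr^λ_ζ u := u - (A_γ - λ)^{-1}(A_max - λ)u`, given the resolvent `R = (A_γ - λ)^{-1}`. -/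
def uzetaL (lam : ℂ) (R : H →L[ℂ] H) (u : S.Amax.domain) : H :=
  (u : H) - R (S.Amax u - lam • (u : H))

/-- `pr^{λ̄}_{ζ'} v := v - (A_γ^* - λ̄)^{-1}(A'_max - λ̄)v`,
given the resolvent `R' = (A_γ^* - λ̄)^{-1}`. -/
def vzetaL (lam : ℂ) (R' : H →L[ℂ] H) (v : S.Amax'.domain) : H :=
  (v : H) - R' (S.Amax' v - (starRingEnd ℂ lam) • (v : H))

/-- `D(T^λ) = {pr^λ_ζ u : u ∈ D(Ã)}`. -/
def dzetaL (lam : ℂ) (R : H →L[ℂ] H) : Set H :=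
  {x | ∃ u : S.Amax.domain, (u : H) ∈ At.domain ∧ x = S.uzetaL lam R u}

/-- `{pr^{λ̄}_{ζ'} v : v ∈ D(Ã*)}`. -/
def dzetaL' (lam : ℂ) (R' : H →L[ℂ] H) : Set H :=
  {x | ∃ v : S.Amax'.domain, (v : H) ∈ At.adjoint.domain ∧ x = S.vzetaL lam R' v}

/-- `V_λ := closure {pr^λ_ζ u : u ∈ D(Ã)}`. -/
def VLsub (lam : ℂ) (R : H →L[ℂ] H) : Submodule ℂ H :=
  (Submodule.span ℂ (S.dzetaL At lam R)).topologicalClosure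

/-- `W_{λ̄} := closure {pr^{λ̄}_{ζ'} v : v ∈ D(Ã*)}`. -/
def WLsub (lam : ℂ) (R' : H →L[ℂ] H) : Submodule ℂ H :=
  (Submodule.span ℂ (S.dzetaL' At lam R')).topologicalClosure

lemma isClosed_WLsub (lam : ℂ) (R' : H →L[ℂ] H) : IsClosed ((S.WLsub At lam R' : Set H)) :=
  Submodule.isClosed_topologicalClosure _

/-- The orthogonal projection onto `W_{λ̄}`. -/
def projWL (lam : ℂ) (R' : H →L[ℂ] H) : H →L[ℂ] H :=
  projCl (S.WLsub At lam R') (S.isClosed_WLsub At lam R')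

/-- The graph of the operator `T^λ : V_λ → W_{λ̄}` corresponding to `Ã - λ`:
`{(pr^λ_ζ u, pr_{W_{λ̄}}((A_max - λ)u)) : u ∈ D(Ã)}`. -/
def TgraphL (lam : ℂ) (R R' : H →L[ℂ] H) : Set (H × H) :=
  {p | ∃ u : S.Amax.domain, (u : H) ∈ At.domain ∧ p.1 = S.uzetaL lam R u ∧
    p.2 = S.projWL At lam R' (S.Amax u - lam • (u : H))}

/-- `G^λ_{V,W} x := -pr_W (λ E^λ x)`, where `W = W(Ã)`. -/
def Gval (lam : ℂ) (R : H →L[ℂ] H) (x : H) : H :=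
  -(S.projW At (lam • Eop lam R x))

/-- `G^μ_{Z,Z} z := -pr_Z (μ E^μ z)`. -/
def GZval (lam : ℂ) (R : H →L[ℂ] H) (x : H) : H :=
  -(S.projZ (lam • Eop lam R x))

lemma mem_Amax_res {lam : ℂ} {Rt : H →L[ℂ] H} (h2 : At ≤ S.Amax)
    (hRt : IsResolvent At lam Rt) (w : H) :
    S.Agaminv w - Rt (w - lam • S.Agaminv w) ∈ S.Amax.domain :=
  Submodule.sub_mem _ (S.Agam_le_max.1 (S.Agaminv_mem w)) (h2.1 (hRt.mem _))

/-- `M(λ) w := pr_ζ ((I - (Ã - λ)^{-1}(A_max - λ)) A_γ^{-1} w)`, the value of the abstract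
`M`-function on `w`. -/
def Mval {lam : ℂ} {Rt : H →L[ℂ] H} (h2 : At ≤ S.Amax) (hRt : IsResolvent At lam Rt)
    (w : H) : H :=
  S.uzeta ⟨S.Agaminv w - Rt (w - lam • S.Agaminv w), S.mem_Amax_res At h2 hRt w⟩

end Setup

end GrubbExt

/-!
Both `A_γ⁻¹` and `(A_γ - λ)⁻¹` are resolvents of `A_γ`, at `0` and at `λ`. For resolvents `R_μ`,
`R_ν` of one operator, `R_μ (x - (μ - ν) R_ν x) = R_ν x` since `(A_γ - μ) R_ν x` equals
`x - (μ - ν) R_ν x`; this makes `I + (μ - ν) R_μ` and `I + (ν - μ) R_ν` mutually inverse. Since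
`(A_max - μ) R_μ = I` on the extension `A_max ⊇ A_γ`, the map `I + (μ - ν) R_μ` sends
`ker (A_max - ν)` into `ker (A_max - μ)`; taking `ν = 0` gives `E^λ` and `F^λ`. The primed half
is the same argument for `A_γ^* ⊆ A'_max`.
-/

theorem LinearPMap.adjoint_le_adjoint_of_le {𝕜 E F : Type*} [RCLike 𝕜] [NormedAddCommGroup E]
    [InnerProductSpace 𝕜 E] [CompleteSpace E] [NormedAddCommGroup F] [InnerProductSpace 𝕜 F]
    [CompleteSpace F] {T S : E →ₗ.[𝕜] F} (hTS : T ≤ S) (hT : Dense (T.domain : Set E)) :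
    S.adjoint ≤ T.adjoint := by
  refine LinearPMap.IsFormalAdjoint.le_adjoint hT fun x y => ?_
  rw [hTS.2 (y := ⟨x, hTS.1 x.2⟩) rfl]
  exact (LinearPMap.adjoint_isFormalAdjoint (hT.mono hTS.1)).symm ⟨x, hTS.1 x.2⟩ y

namespace GrubbExt

section Resolvent

variable {H : Type*} [NormedAddCommGroup H] [InnerProductSpace ℂ H]

theorem Eop_apply (c : ℂ) (R : H →L[ℂ] H) (x : H) : Eop c R x = x + c • R x := rfl

theorem Eop'_eq_Eop (lam : ℂ) (R' : H →L[ℂ] H) : Eop' lam R' = Eop (starRingEnd ℂ lam) R' :=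
  rfl

def eigenSet (Q : H →ₗ.[ℂ] H) (μ : ℂ) : Set H :=
  {x | ∃ hx : x ∈ Q.domain, Q ⟨x, hx⟩ = μ • x}

namespace IsResolvent

variable {P Q : H →ₗ.[ℂ] H} {μ ν c : ℂ} {Rμ Rν : H →L[ℂ] H}

theorem apply_mem (hμ : IsResolvent P μ Rμ) (x : H) :
    P ⟨Rμ x, hμ.mem x⟩ = x + μ • Rμ x :=
  sub_eq_iff_eq_add.mp (hμ.right x)

theorem apply_mem_of_le (hμ : IsResolvent P μ Rμ) (hPQ : P ≤ Q) (x : H) :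
    Q ⟨Rμ x, hPQ.1 (hμ.mem x)⟩ = x + μ • Rμ x := by
  rw [← hPQ.2 (x := ⟨Rμ x, hμ.mem x⟩) rfl, hμ.apply_mem]

theorem apply_sub_smul (hμ : IsResolvent P μ Rμ) (hν : IsResolvent P ν Rν) (x : H) :
    Rμ (x - (μ - ν) • Rν x) = Rν x := by
  have h := hμ.left ⟨Rν x, hν.mem x⟩
  rwa [hν.apply_mem, show x + ν • Rν x - μ • Rν x = x - (μ - ν) • Rν x by module] at h

theorem Eop_Eop_neg (hμ : IsResolvent P μ Rμ) (hν : IsResolvent P ν Rν) (hc : μ - ν = c)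
    (x : H) : Eop c Rμ (Eop (-c) Rν x) = x := by
  subst hc
  calc Eop (μ - ν) Rμ (Eop (-(μ - ν)) Rν x)
      = (x - (μ - ν) • Rν x) + (μ - ν) • Rμ (x - (μ - ν) • Rν x) := by
        rw [Eop_apply, Eop_apply, neg_smul, ← sub_eq_add_neg]
    _ = x := by rw [hμ.apply_sub_smul hν x]; abel

theorem Eop_neg_Eop (hμ : IsResolvent P μ Rμ) (hν : IsResolvent P ν Rν) (hc : μ - ν = c)
    (x : H) : Eop (-c) Rν (Eop c Rμ x) = x := by
  simpa only [neg_neg] using hν.Eop_Eop_neg hμ (c := -c) (by rw [← neg_sub, hc]) x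

theorem mapsTo_eigenSet (hμ : IsResolvent P μ Rμ) (hPQ : P ≤ Q) (hc : μ - ν = c) :
    Set.MapsTo (Eop c Rμ) (eigenSet Q ν) (eigenSet Q μ) := by
  rintro x ⟨hx, hQx⟩
  have hR := hPQ.1 (hμ.mem x)
  refine ⟨Q.domain.add_mem hx (Q.domain.smul_mem c hR), ?_⟩
  have hsplit : Q ⟨Eop c Rμ x, Q.domain.add_mem hx (Q.domain.smul_mem c hR)⟩ =
      Q ⟨x, hx⟩ + c • Q ⟨Rμ x, hR⟩ := by
    rw [← Q.map_smul, ← Q.map_add]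
    rfl
  rw [hsplit, hQx, hμ.apply_mem_of_le hPQ, Eop_apply, ← hc]
  module

theorem bijOn_eigenSet (hμ : IsResolvent P μ Rμ) (hν : IsResolvent P ν Rν) (hPQ : P ≤ Q)
    (hc : μ - ν = c) : Set.BijOn (Eop c Rμ) (eigenSet Q ν) (eigenSet Q μ) :=
  Set.InvOn.bijOn ⟨fun x _ => hμ.Eop_neg_Eop hν hc x, fun x _ => hμ.Eop_Eop_neg hν hc x⟩
    (hμ.mapsTo_eigenSet hPQ hc) (hν.mapsTo_eigenSet hPQ (by rw [← neg_sub, hc]))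

end IsResolvent

end Resolvent

namespace Setup

variable {H : Type*} [NormedAddCommGroup H] [InnerProductSpace ℂ H] [CompleteSpace H]
  (S : Setup H)

theorem isResolvent_Agaminv : IsResolvent S.Agam 0 S.Agaminv where
  mem := S.Agaminv_mem
  left u := by simpa using S.Agaminv_left u
  right f := by simpa using S.Agaminv_right f

theorem isResolvent_Agamstarinv : IsResolvent S.Agam.adjoint 0 S.Agamstarinv where
  mem := S.Agamstarinv_mem
  left v := by simpa using S.Agamstarinv_left v
  right f := by simpa using S.Agamstarinv_right f

theorem Agam_adjoint_le_Amax' : S.Agam.adjoint ≤ S.Amax' :=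
  LinearPMap.adjoint_le_adjoint_of_le S.Amin_le_Agam S.dense_Amin

theorem Fop_eq_Eop (lam : ℂ) : S.Fop lam = Eop (-lam) S.Agaminv := by
  simp [Fop, Eop, sub_eq_add_neg]

theorem Fop'_eq_Eop (lam : ℂ) : S.Fop' lam = Eop (-starRingEnd ℂ lam) S.Agamstarinv := by
  simp [Fop', Eop, sub_eq_add_neg]

theorem coe_Zker_eq_eigenSet : (S.Zker : Set H) = eigenSet S.Amax 0 := by
  ext x
  simp [Zker, eigenSet]

theorem coe_Zker'_eq_eigenSet : (S.Zker' : Set H) = eigenSet S.Amax' 0 := by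
  ext x
  simp [Zker', eigenSet]

end Setup

variable {H : Type*} [NormedAddCommGroup H] [InnerProductSpace ℂ H] [CompleteSpace H]

theorem statement_9 (S : Setup H) (lam : ℂ) (R R' : H →L[ℂ] H)
    (hR : IsResolvent S.Agam lam R)
    (hR' : IsResolvent S.Agam.adjoint (starRingEnd ℂ lam) R') :
    (∀ x : H, Eop lam R (S.Fop lam x) = x ∧ S.Fop lam (Eop lam R x) = x) ∧
    (∀ x : H, Eop' lam R' (S.Fop' lam x) = x ∧ S.Fop' lam (Eop' lam R' x) = x) ∧
    Set.BijOn (Eop lam R) (S.Zker : Set H) (S.ZkerL lam) ∧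
    Set.MapsTo (S.Fop lam) (S.ZkerL lam) (S.Zker : Set H) ∧
    Set.BijOn (Eop' lam R') (S.Zker' : Set H) (S.ZkerL' lam) ∧
    Set.MapsTo (S.Fop' lam) (S.ZkerL' lam) (S.Zker' : Set H) := by
  have h0 := S.isResolvent_Agaminv
  have h0' := S.isResolvent_Agamstarinv
  have hle := S.Agam_le_max
  have hle' := S.Agam_adjoint_le_Amax'
  rw [S.coe_Zker_eq_eigenSet, S.coe_Zker'_eq_eigenSet, S.Fop_eq_Eop, S.Fop'_eq_Eop, Eop'_eq_Eop]
  exact ⟨fun x => ⟨hR.Eop_Eop_neg h0 (sub_zero _) x, hR.Eop_neg_Eop h0 (sub_zero _) x⟩,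
    fun x => ⟨hR'.Eop_Eop_neg h0' (sub_zero _) x, hR'.Eop_neg_Eop h0' (sub_zero _) x⟩,
    hR.bijOn_eigenSet h0 hle (sub_zero _), h0.mapsTo_eigenSet hle (zero_sub _),
    hR'.bijOn_eigenSet h0' hle' (sub_zero _), h0'.mapsTo_eigenSet hle' (zero_sub _)⟩

end GrubbExt
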